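/- arXiv:1406.0100 — 2 statements merged into one kernel-verified Lean document; each statement's English description precedes it below -/
import Mathlib

section
/- For all integers m ≥ 1, n ≥ 1 and every h with 0 ≤ h ≤ m−1, the following holds in ℂ: det(A_n − t_{h,m}·I_n) = (−1)^n · U_{2n}(i·cos((m−h)π/(2m+1))), where t_{h,m} = 2·cos((2h+1)π/(2m+1)) and i is the imaginary unit. -/
open Real Polynomial

/-- The `n × n` matrix `A_n` with diagonal entries `4` except the last, which is `3`,
entries `-1` on the sub- and super-diagonal, and `0` elsewhere. -/
def matA (n : ℕ) : Matrix (Fin n) (Fin n) ℝ :=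
  Matrix.of fun h k =>
    if h = k then (if (h : ℕ) = n - 1 then 3 else 4)
    else if |(h : ℤ) - (k : ℤ)| = 1 then -1 else 0

/-- The shifted matrix `A_n - t • 1`. -/
def matB (n : ℕ) (t : ℝ) : Matrix (Fin n) (Fin n) ℝ :=
  Matrix.of fun h k =>
    if h = k then (if (h : ℕ) = n - 1 then 3 - t else 4 - t)
    else if |(h : ℤ) - (k : ℤ)| = 1 then -1 else 0

lemma matA_sub_smul (n : ℕ) (t : ℝ) :
    matA n - t • (1 : Matrix (Fin n) (Fin n) ℝ) = matB n t := by
  ext i j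
  simp only [matA, matB, Matrix.sub_apply, Matrix.smul_apply, Matrix.one_apply,
    Matrix.of_apply, smul_eq_mul]
  by_cases hij : i = j <;> simp [hij] <;> split_ifs <;> ring

lemma matB_zero {n : ℕ} (t : ℝ) {i j : Fin n} (h1 : (i : ℕ) ≠ (j : ℕ))
    (h2 : (i : ℕ) + 1 ≠ (j : ℕ)) (h3 : (j : ℕ) + 1 ≠ (i : ℕ)) : matB n t i j = 0 := by
  have hne : ¬ i = j := by rw [Fin.ext_iff]; exact h1
  have habs : ¬ |(i : ℤ) - (j : ℤ)| = 1 := by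
    rw [abs_eq (by norm_num : (0:ℤ) ≤ 1)]; omega
  simp [matB, hne, habs]

lemma matB_adj {n : ℕ} (t : ℝ) {i j : Fin n}
    (h : (i : ℕ) + 1 = (j : ℕ) ∨ (j : ℕ) + 1 = (i : ℕ)) : matB n t i j = -1 := by
  have hne : ¬ i = j := by rw [Fin.ext_iff]; omega
  have habs : |(i : ℤ) - (j : ℤ)| = 1 := by
    rw [abs_eq (by norm_num : (0:ℤ) ≤ 1)]; omega
  simp [matB, hne, habs]

lemma matB_succ_succ_minor0 (n : ℕ) (t : ℝ) :
    (matB (n + 2) t).submatrix Fin.succ Fin.succ = matB (n + 1) t := by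
  ext i j
  simp only [Matrix.submatrix_apply, matB, Matrix.of_apply, Fin.succ_inj, Fin.val_succ,
    abs_eq (by norm_num : (0:ℤ) ≤ 1), Fin.ext_iff]
  push_cast
  split_ifs <;> first | rfl | omega

lemma matB_succ_succ_minor1 (n : ℕ) (t : ℝ) :
    ((matB (n + 2) t).submatrix Fin.succ ((1 : Fin (n+2)).succAbove)).submatrix
      Fin.succ Fin.succ = matB n t := by
  ext i j
  simp only [Matrix.submatrix_apply, Fin.one_succAbove_succ, matB, Matrix.of_apply,
    Fin.succ_inj, Fin.val_succ, abs_eq (by norm_num : (0:ℤ) ≤ 1), Fin.ext_iff]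
  push_cast
  split_ifs <;> first | rfl | omega

lemma det_matB_rec (n : ℕ) (t : ℝ) :
    (matB (n + 2) t).det = (4 - t) * (matB (n + 1) t).det - (matB n t).det := by
  have e00 : matB (n + 2) t 0 0 = 4 - t := by
    have h0 : ¬ ((0 : Fin (n+2)) : ℕ) = n + 2 - 1 := by simp only [Fin.val_zero]; omega
    simp [matB, h0]
  have e01 : matB (n + 2) t 0 1 = -1 := matB_adj t (Or.inl (by simp))
  have hN : ((matB (n + 2) t).submatrix Fin.succ ((1 : Fin (n+2)).succAbove)).det
      = -(matB n t).det := by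
    rw [Matrix.det_succ_column_zero, Fin.sum_univ_succ, Finset.sum_eq_zero (fun i _ => ?_)]
    · have h10 : (matB (n + 2) t).submatrix Fin.succ ((1 : Fin (n+2)).succAbove) 0 0 = -1 := by
        simp only [Matrix.submatrix_apply, Fin.one_succAbove_zero, Fin.succ_zero_eq_one]
        exact matB_adj t (Or.inr (by simp))
      rw [h10]
      simp only [Fin.val_zero, pow_zero, Fin.succAbove_zero, add_zero]
      rw [matB_succ_succ_minor1]
      ring
    · have hz : (matB (n + 2) t).submatrix Fin.succ ((1 : Fin (n+2)).succAbove) i.succ 0 = 0 := by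
        simp only [Matrix.submatrix_apply, Fin.one_succAbove_zero]
        exact matB_zero t (by simp) (by simp) (by simp)
      rw [hz]; ring
  rw [Matrix.det_succ_row_zero, Fin.sum_univ_succ, Fin.sum_univ_succ,
    Finset.sum_eq_zero (fun j _ => ?_)]
  · simp only [Fin.succ_zero_eq_one, Fin.succAbove_zero, Fin.val_zero, Fin.val_one,
      pow_zero, pow_one, e00, e01, matB_succ_succ_minor0, hN, add_zero]
    ring
  · rw [matB_zero t (by simp) (by simp) (by simp)]
    ring

/-- The key induction. -/
lemma det_matB_eq_cheb (t : ℝ) (z : ℂ) (ht : (t : ℂ) = 2 + 4 * z ^ 2) (n : ℕ) :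
    ((matB n t).det : ℂ) = (-1 : ℂ) ^ n * (Polynomial.Chebyshev.U ℂ (2 * n)).eval z := by
  induction n using Nat.twoStepInduction with
  | zero => simp [Matrix.det_fin_zero, Polynomial.Chebyshev.U_zero]
  | one =>
      rw [Matrix.det_fin_one]
      have hB : (matB 1 t) 0 0 = 3 - t := by simp [matB]
      rw [hB]
      have h2 : (2 * ((1:ℕ):ℤ) : ℤ) = 2 := by norm_num
      rw [h2, Polynomial.Chebyshev.U_two]
      simp only [Polynomial.eval_sub, Polynomial.eval_mul, Polynomial.eval_pow,
        Polynomial.eval_ofNat, Polynomial.eval_X, Polynomial.eval_one]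
      push_cast
      rw [ht]; ring
  | more n ih ih1 =>
      have hdet : ((matB (n + 2) t).det : ℂ)
          = (4 - (t:ℂ)) * ((matB (n + 1) t).det : ℂ) - ((matB n t).det : ℂ) := by
        rw [det_matB_rec]; push_cast; ring
      rw [hdet, ih, ih1, ht]
      have e1 := congrArg (Polynomial.eval z) (Polynomial.Chebyshev.U_add_two ℂ (2*(n:ℤ)))
      have e2 := congrArg (Polynomial.eval z) (Polynomial.Chebyshev.U_add_two ℂ (2*(n:ℤ)+1))
      have e3 := congrArg (Polynomial.eval z) (Polynomial.Chebyshev.U_add_two ℂ (2*(n:ℤ)+2))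
      simp only [Polynomial.eval_sub, Polynomial.eval_mul, Polynomial.eval_ofNat,
        Polynomial.eval_X] at e1 e2 e3
      push_cast
      ring_nf at e1 e2 e3 ⊢
      linear_combination (-((-1:ℂ)^n)) * e3 - (2*z*(-1:ℂ)^n) * e2 - ((-1:ℂ)^n) * e1

theorem charpoly_matA_value_eq_chebyshevU (m n : ℕ) (hm : 1 ≤ m) (hn : 1 ≤ n)
    (h : ℕ) (hh : h ≤ m - 1) :
    ((Matrix.det
        (matA n - (2 * Real.cos ((2 * h + 1) * π / (2 * m + 1))) •
          (1 : Matrix (Fin n) (Fin n) ℝ)) : ℝ) : ℂ) =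
      (-1 : ℂ) ^ n *
        (Polynomial.Chebyshev.U ℂ (2 * n)).eval
          (Complex.I * (Real.cos (((m : ℝ) - h) * π / (2 * m + 1)) : ℂ)) := by
  rw [matA_sub_smul]
  apply det_matB_eq_cheb
  have hang : (2 * (h:ℝ) + 1) * π / (2 * m + 1) = π - 2 * (((m:ℝ) - h) * π / (2 * m + 1)) := by
    have hne : (2 * (m:ℝ) + 1) ≠ 0 := by positivity
    field_simp
    ring
  have key : 2 * Real.cos ((2 * (h:ℝ) + 1) * π / (2 * m + 1)) =
      2 - 4 * Real.cos (((m:ℝ) - h) * π / (2 * m + 1)) ^ 2 := by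
    rw [hang, Real.cos_pi_sub, Real.cos_two_mul]
    ring
  rw [key]
  have hsq : ∀ x : ℂ, (Complex.I * x) ^ 2 = -x ^ 2 := fun x => by
    rw [mul_pow, Complex.I_sq]; ring
  rw [hsq]
  push_cast
  ring
end

section
/- For all integers m ≥ 1 and n ≥ 1, the following identity holds in ℂ: (−1)^{mn} · 2^m · ∏_{h=1}^{m} T_{2n}(i·cos((2h−1)π/(4m))) = ∏_{h=1}^{m} ∏_{k=1}^{n} (4·cos²((2h−1)π/(4m)) + 4·cos²((2k−1)π/(4n))), where i is the imaginary unit and the right-hand side is a real number regarded as a complex number. -/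
/-!
The roots of `T_N` are the Chebyshev nodes `cos ((2k+1)π/(2N))`, `k < N`, and its leading
coefficient is `2^(N-1)`. For `N = 2n` the nodes come in pairs `±cos ((2k+1)π/(4n))`, so
`T_{2n}(z) = 2^(2n-1) ∏_{k<n} (z² - cos² ((2k+1)π/(4n)))`. At `z = i c` every factor becomes
`-(c² + cos² …)`, which gives `(-1)^n · 2 · T_{2n}(i c) = ∏_k (4c² + 4cos² …)`; the theorem is the
product of these identities over `c = cos ((2h-1)π/(4m))`.
-/

open Real Polynomial

theorem Finset.prod_range_two_mul {M : Type*} [CommMonoid M] (f : ℕ → M) (n : ℕ) :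
    ∏ k ∈ range (2 * n), f k = ∏ k ∈ range n, (f k * f (2 * n - 1 - k)) := by
  rw [two_mul, prod_range_add, ← prod_range_reflect (fun k ↦ f (n + k)), ← prod_mul_distrib]
  refine prod_congr rfl fun k hk ↦ ?_
  rw [mem_range] at hk
  congr 2
  omega

theorem Real.cos_reflect_odd_mul_pi_div {N k : ℕ} (hk : k < N) :
    cos ((2 * (N - 1 - k : ℕ) + 1) * π / (2 * N)) = -cos ((2 * k + 1) * π / (2 * N)) := by
  have hN : (N : ℝ) ≠ 0 := Nat.cast_ne_zero.mpr (by omega)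
  rw [← cos_pi_sub]
  congr 1
  rw [Nat.cast_sub (by omega), Nat.cast_sub (by omega)]
  field_simp
  ring

namespace Polynomial.Chebyshev

theorem T_real_eq_C_mul_prod (n : ℕ) :
    T ℝ n = Polynomial.C (2 ^ (n - 1)) *
      ∏ k ∈ Finset.range n, (X - Polynomial.C (cos ((2 * k + 1) * π / (2 * n)))) := by
  have hinj : Set.InjOn (fun k : ℕ ↦ cos ((2 * k + 1) * π / (2 * n))) (Finset.range n) :=
    (Finset.range n).nodup_map_iff_injOn.mp (roots_T_real_nodup n)
  have hcard : Multiset.card (T ℝ n).roots = (T ℝ n).natDegree := by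
    rw [roots_T_real, Finset.card_val, Finset.card_image_of_injOn hinj, Finset.card_range,
      natDegree_T, Int.natAbs_natCast]
  rw [← C_leadingCoeff_mul_prod_multiset_X_sub_C hcard, leadingCoeff_T, Int.natAbs_natCast,
    roots_T_real, ← Finset.prod_eq_multiset_prod, Finset.prod_image hinj]

theorem eval_T_complex_eq_mul_prod (n : ℕ) (z : ℂ) :
    (T ℂ n).eval z =
      2 ^ (n - 1) * ∏ k ∈ Finset.range n, (z - (cos ((2 * k + 1) * π / (2 * n)) : ℝ)) := by
  rw [← map_T (algebraMap ℝ ℂ), T_real_eq_C_mul_prod n]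
  simp

theorem eval_T_two_mul_eq_mul_prod_sq_sub (n : ℕ) (z : ℂ) :
    (T ℂ (2 * n)).eval z = 2 ^ (2 * n - 1) *
      ∏ k ∈ Finset.range n, (z ^ 2 - (cos ((2 * k + 1) * π / (4 * n)) : ℝ) ^ 2) := by
  have h2n : (2 * n : ℤ) = (2 * n : ℕ) := by push_cast; rfl
  rw [h2n, eval_T_complex_eq_mul_prod, Finset.prod_range_two_mul]
  congr 1
  refine Finset.prod_congr rfl fun k hk ↦ ?_
  rw [Finset.mem_range] at hk
  rw [cos_reflect_odd_mul_pi_div (by omega),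
    show (2 * ((2 * n : ℕ) : ℝ)) = 4 * n by push_cast; ring]
  push_cast
  ring

theorem neg_one_pow_mul_two_mul_eval_T_I_mul {n : ℕ} (hn : n ≠ 0) (c : ℂ) :
    (-1) ^ n * 2 * (T ℂ (2 * n)).eval (Complex.I * c) =
      ∏ k ∈ Finset.Icc 1 n, (4 * c ^ 2 + 4 * (cos ((2 * k - 1) * π / (4 * n)) : ℝ) ^ 2) := by
  have hscalar : (-1 : ℂ) ^ n * 2 * 2 ^ (2 * n - 1) = (-4) ^ n := calc
    (-1 : ℂ) ^ n * 2 * 2 ^ (2 * n - 1) = (-1) ^ n * 2 ^ (2 * n - 1 + 1) := by rw [pow_succ']; ring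
    _ = (-4) ^ n := by rw [Nat.sub_add_cancel (by omega), pow_mul, neg_pow (4 : ℂ)]; norm_num
  rw [← Finset.Ico_add_one_right_eq_Icc, Finset.prod_Ico_eq_prod_range, Nat.add_sub_cancel,
    eval_T_two_mul_eq_mul_prod_sq_sub, ← mul_assoc, hscalar]
  nth_rw 1 [← Finset.card_range n]
  rw [Finset.pow_card_mul_prod]
  refine Finset.prod_congr rfl fun k _ ↦ ?_
  rw [show 2 * ((1 + k : ℕ) : ℝ) - 1 = 2 * k + 1 by push_cast; ring, mul_pow, Complex.I_sq]
  ring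

end Polynomial.Chebyshev

theorem chebyshevT_product_eq_double_product_oddodd_general (m n : ℕ) (hn : 1 ≤ n) :
    (-1 : ℂ) ^ (m * n) * 2 ^ m *
      ∏ h ∈ Finset.Icc 1 m,
        (Polynomial.Chebyshev.T ℂ (2 * n)).eval
          (Complex.I * (Real.cos ((2 * h - 1) * π / (4 * m)) : ℂ)) =
      ((∏ h ∈ Finset.Icc 1 m, ∏ k ∈ Finset.Icc 1 n,
        (4 * Real.cos ((2 * h - 1) * π / (4 * m)) ^ 2 +
         4 * Real.cos ((2 * k - 1) * π / (4 * n)) ^ 2) : ℝ) : ℂ) := by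
  have hrow (h : ℕ) := Polynomial.Chebyshev.neg_one_pow_mul_two_mul_eval_T_I_mul
    (by omega : n ≠ 0) (Real.cos ((2 * h - 1) * π / (4 * m)) : ℂ)
  push_cast at hrow ⊢
  simp only [← hrow, Finset.prod_mul_distrib, Finset.prod_const, Nat.card_Icc, Nat.add_sub_cancel]
  rw [← pow_mul, mul_comm n m]

theorem chebyshevT_product_eq_double_product_oddodd (m n : ℕ) (hm : 1 ≤ m) (hn : 1 ≤ n) :
    (-1 : ℂ) ^ (m * n) * 2 ^ m *
      ∏ h ∈ Finset.Icc 1 m,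
        (Polynomial.Chebyshev.T ℂ (2 * n)).eval
          (Complex.I * (Real.cos ((2 * h - 1) * π / (4 * m)) : ℂ)) =
      ((∏ h ∈ Finset.Icc 1 m, ∏ k ∈ Finset.Icc 1 n,
        (4 * Real.cos ((2 * h - 1) * π / (4 * m)) ^ 2 +
         4 * Real.cos ((2 * k - 1) * π / (4 * n)) ^ 2) : ℝ) : ℂ) :=
  chebyshevT_product_eq_double_product_oddodd_general m n hn
end
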